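/- arXiv:2008.03524 — 2 statements merged into one kernel-verified Lean document; each statement's English description precedes it below -/
import Mathlib

section
/- For every nonnegative integer n and complex t with |t| < 1, t ≠ 0: ₂F₁(1/2 + n, 1 + n; 2 + n; t) = (2(-1)^n (n+1)! / ((1/2)_n · t^{n+1})) · [1 - (1-t)^{1/2-n} · ∑_{k=0}^{n} ((1/2 - n)_k / k!) t^k]. -/
/-!
Put `s = 1/2 + n`. Since `(1+n)_k / (2+n)_k = (n+1)/(n+k+1)`, the function
`A(w) = w^(n+1) ₂F₁(s, 1+n; 2+n; w) / (n+1)` is the termwise antiderivative of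
`w^n (1-w)^(-s) = ∑ (s)_k/k! w^(n+k)`. If `P` is the degree-`n` truncation of the binomial series
of `(1-w)^(s-1)`, then `R(w) = 1 - (1-w)^(1-s) P(w)` has derivative `(1-s)_(n+1)/n! · w^n (1-w)^(-s)`,
because `(1-s) P - (1-w) P'` telescopes to its top term. Both vanish at `0`, so
`(1-s)_(n+1) A = n! R` on the unit disc, and `(1/2-n)_(n+1) = (-1)^n (1/2)_n / 2`.
-/

open scoped BigOperators

/-- Pochhammer symbol `(a)_k` on `ℂ`. -/
noncomputable def pochC (a : ℂ) (k : ℕ) : ℂ := ∏ i ∈ Finset.range k, (a + i)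

/-- Gauss hypergeometric series `₂F₁(a,b;c;z)`. -/
noncomputable def hyp2F1 (a b c z : ℂ) : ℂ :=
  ∑' k : ℕ, pochC a k * pochC b k / (pochC c k * (k.factorial : ℂ)) * z ^ k

open Metric Finset FormalMultilinearSeries

lemma pochC_succ (a : ℂ) (k : ℕ) : pochC a (k + 1) = pochC a k * (a + k) :=
  prod_range_succ _ _

lemma pochC_eq_ascPochhammer_eval (a : ℂ) (k : ℕ) : pochC a k = (ascPochhammer ℂ k).eval a := by
  induction k with
  | zero => simp [pochC]
  | succ k ih => rw [pochC_succ, ih, ascPochhammer_succ_eval]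

lemma pochC_ne_zero {a : ℂ} (ha : ∀ j : ℕ, a ≠ -j) (k : ℕ) : pochC a k ≠ 0 := by
  rw [pochC_eq_ascPochhammer_eval, Ne, ascPochhammer_eval_eq_zero_iff]
  rintro ⟨j, -, hj⟩
  exact ha j (by linear_combination hj)

lemma pochC_one_sub_sub (a : ℂ) (n : ℕ) : pochC (1 - a - n) n = (-1) ^ n * pochC a n := by
  rw [pochC_eq_ascPochhammer_eval, pochC_eq_ascPochhammer_eval,
    show 1 - a - n = -(a + n - 1) by ring, ascPochhammer_eval_neg_eq_descPochhammer,
    descPochhammer_eval_eq_ascPochhammer]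
  congr 2
  ring

lemma pochC_mul_add (a : ℂ) (k : ℕ) : pochC a k * (a + k) = a * pochC (a + 1) k := by
  induction k with
  | zero => simp [pochC]
  | succ k ih =>
    rw [pochC_succ, pochC_succ]
    push_cast
    linear_combination (a + 1 + k) * ih

lemma pochC_div_factorial_eq_choose (a : ℂ) (k : ℕ) :
    pochC a k / k.factorial = Ring.choose (a + k - 1) k := by
  rw [← Ring.multichoose_eq, div_eq_iff (Nat.cast_ne_zero.mpr k.factorial_ne_zero),
    pochC_eq_ascPochhammer_eval, ← Polynomial.ascPochhammer_smeval_eq_eval,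
    ← Ring.factorial_nsmul_multichoose_eq_ascPochhammer, nsmul_eq_mul, mul_comm]

lemma pochC_succ_div_factorial_succ (a : ℂ) (k : ℕ) :
    pochC a (k + 1) / (k + 1).factorial * (k + 1) = pochC a k / k.factorial * (a + k) := by
  rw [pochC_succ, Nat.factorial_succ]
  push_cast
  field_simp

lemma hasFPowerSeriesOnBall_one_sub_cpow_neg (s : ℂ) :
    HasFPowerSeriesOnBall (fun z ↦ (1 - z) ^ (-s))
      (ofScalars ℂ fun k ↦ pochC s k / k.factorial) 0 1 := by
  simpa only [pochC_div_factorial_eq_choose, one_div, ← Complex.cpow_neg] using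
    Complex.one_div_one_sub_cpow_hasFPowerSeriesOnBall_zero s

lemma hasSum_pochC_div_factorial_mul_pow (s : ℂ) {z : ℂ} (hz : ‖z‖ < 1) :
    HasSum (fun k ↦ pochC s k / k.factorial * z ^ k) ((1 - z) ^ (-s)) := by
  have hz' : ‖z‖ₑ < 1 := by simpa [← ENNReal.coe_one] using (show ‖z‖₊ < 1 from hz)
  simpa [ofScalars_apply_eq, mul_comm] using
    (hasFPowerSeriesOnBall_one_sub_cpow_neg s).hasSum (y := z) (mem_eball_zero_iff.mpr hz')

lemma hasDerivAt_tsum_div_mul_pow {c : ℕ → ℂ} (hc : 1 ≤ (ofScalars ℂ c).radius) (m : ℕ)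
    {z : ℂ} (hz : ‖z‖ < 1) :
    HasDerivAt (fun w ↦ ∑' k, c k / (m + k + 1) * w ^ (m + k + 1))
      (∑' k, c k * z ^ (m + k)) z := by
  obtain ⟨r, hzr, hr1⟩ := exists_between (show ‖z‖₊ < 1 from hz)
  have hu : Summable fun k ↦ ‖c k‖ * (r : ℝ) ^ k := by
    simpa [ofScalars_norm] using (ofScalars ℂ c).summable_norm_mul_pow
      ((ENNReal.coe_lt_one_iff.mpr hr1).trans_le hc)
  refine hasDerivAt_tsum_of_isPreconnected (y₀ := 0)
    (g := fun k w ↦ c k / (m + k + 1) * w ^ (m + k + 1)) (g' := fun k w ↦ c k * w ^ (m + k))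
    hu isOpen_ball (convex_ball (0 : ℂ) r).isPreconnected
    (fun k w _ ↦ ?_) (fun k w hw ↦ ?_) (mem_ball_self (hzr.trans_le' bot_le)) ?_
    (mem_ball_zero_iff.mpr hzr)
  · have hk : (m + k + 1 : ℂ) ≠ 0 := by exact_mod_cast Nat.succ_ne_zero (m + k)
    refine ((hasDerivAt_pow (m + k + 1) w).const_mul (c k / (m + k + 1))).congr_deriv ?_
    push_cast
    field_simp
  · have hw1 : ‖w‖ ≤ 1 := (mem_ball_zero_iff.mp hw).le.trans (by exact_mod_cast hr1.le)
    rw [norm_mul, norm_pow, pow_add]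
    gcongr
    calc ‖w‖ ^ m * ‖w‖ ^ k ≤ 1 * ‖w‖ ^ k := by gcongr; exact pow_le_one₀ (norm_nonneg w) hw1
      _ ≤ r ^ k := by rw [one_mul]; gcongr; exact (mem_ball_zero_iff.mp hw).le
  · simp

lemma hasDerivAt_sum_range_mul_pow (d : ℕ → ℂ) (n : ℕ) (z : ℂ) :
    HasDerivAt (fun w ↦ ∑ k ∈ range (n + 1), d k * w ^ k)
      (∑ k ∈ range n, d (k + 1) * (k + 1) * z ^ k) z := by
  refine (HasDerivAt.fun_sum fun k _ ↦ (hasDerivAt_pow k z).const_mul (d k)).congr_deriv ?_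
  rw [sum_range_succ']
  simp only [Nat.cast_zero, zero_mul, mul_zero, add_zero, Nat.add_sub_cancel, Nat.cast_succ]
  exact sum_congr rfl fun k _ ↦ by ring

lemma mul_sum_sub_one_sub_mul_sum_pochC (b : ℂ) (n : ℕ) (w : ℂ) :
    b * ∑ k ∈ range (n + 1), pochC b k / k.factorial * w ^ k
      - (1 - w) * ∑ k ∈ range n, pochC b k / k.factorial * (b + k) * w ^ k
      = pochC b n / n.factorial * (b + n) * w ^ n := by
  induction n with
  | zero => simp [pochC]
  | succ n ih =>
    rw [sum_range_succ (fun k ↦ pochC b k / k.factorial * w ^ k),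
      sum_range_succ (fun k ↦ pochC b k / k.factorial * (b + k) * w ^ k)]
    push_cast
    linear_combination ih - w ^ (n + 1) * pochC_succ_div_factorial_succ b n

lemma hasDerivAt_one_sub_cpow_mul_sum_pochC (b : ℂ) (n : ℕ) {z : ℂ}
    (hz : 1 - z ∈ Complex.slitPlane) :
    HasDerivAt (fun w ↦ 1 - (1 - w) ^ b * ∑ k ∈ range (n + 1), pochC b k / k.factorial * w ^ k)
      (pochC b (n + 1) / n.factorial * z ^ n * (1 - z) ^ (b - 1)) z := by
  have hpow : HasDerivAt (fun w : ℂ ↦ (1 - w) ^ b) (b * (1 - z) ^ (b - 1) * -1) z :=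
    ((hasDerivAt_id z).const_sub 1).cpow_const hz
  have hsum := hasDerivAt_sum_range_mul_pow (fun k ↦ pochC b k / k.factorial) n z
  simp only [pochC_succ_div_factorial_succ] at hsum
  refine ((hpow.mul hsum).const_sub 1).congr_deriv ?_
  have hsplit : (1 - z) ^ b = (1 - z) ^ (b - 1) * (1 - z) := by
    have hne := Complex.slitPlane_ne_zero hz
    rw [Complex.cpow_sub _ _ hne, Complex.cpow_one, div_mul_cancel₀ _ hne]
  rw [hsplit, pochC_succ]
  linear_combination (1 - z) ^ (b - 1) * mul_sum_sub_one_sub_mul_sum_pochC b n z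

lemma pochC_mul_pochC_one_add_div_pochC_two_add (s : ℂ) (n k : ℕ) :
    pochC s k * pochC (1 + n) k / (pochC (2 + n) k * k.factorial)
      = (n + 1) * (pochC s k / k.factorial / (n + k + 1)) := by
  have hshift := pochC_mul_add (1 + n) k
  rw [show (1 : ℂ) + n + 1 = 2 + n by ring] at hshift
  have h2n : pochC (2 + n) k ≠ 0 := pochC_ne_zero (fun j h ↦ by
    have : ((2 + n + j : ℕ) : ℂ) = 0 := by push_cast; linear_combination h
    exact absurd (Nat.cast_eq_zero.mp this) (by omega)) k
  have hnk : (n + k + 1 : ℂ) ≠ 0 := by exact_mod_cast Nat.succ_ne_zero (n + k)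
  have hfac : (k.factorial : ℂ) ≠ 0 := Nat.cast_ne_zero.mpr k.factorial_ne_zero
  field_simp
  linear_combination pochC s k * hshift

lemma one_sub_mem_slitPlane {z : ℂ} (hz : ‖z‖ < 1) : 1 - z ∈ Complex.slitPlane := by
  simpa [sub_eq_add_neg] using Complex.mem_slitPlane_of_norm_lt_one (z := -z) (by simpa using hz)

theorem pochC_one_sub_mul_pow_mul_hyp2F1 (s : ℂ) (n : ℕ) {t : ℂ} (ht : ‖t‖ < 1) :
    pochC (1 - s) (n + 1) * t ^ (n + 1) * hyp2F1 s (1 + n) (2 + n) t =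
      (n + 1).factorial * (1 - (1 - t) ^ (1 - s) *
        ∑ k ∈ range (n + 1), pochC (1 - s) k / k.factorial * t ^ k) := by
  set c : ℕ → ℂ := fun k ↦ pochC s k / k.factorial
  set A : ℂ → ℂ := fun w ↦ ∑' k, c k / (n + k + 1) * w ^ (n + k + 1)
  set R : ℂ → ℂ := fun w ↦
    1 - (1 - w) ^ (1 - s) * ∑ k ∈ range (n + 1), pochC (1 - s) k / k.factorial * w ^ k
  have hF : t ^ (n + 1) * hyp2F1 s (1 + n) (2 + n) t = (n + 1) * A t := by
    simp only [hyp2F1, pochC_mul_pochC_one_add_div_pochC_two_add, A, ← tsum_mul_left]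
    exact tsum_congr fun k ↦ by ring
  have hc : 1 ≤ (ofScalars ℂ c).radius := (hasFPowerSeriesOnBall_one_sub_cpow_neg s).r_le
  have hA : ∀ z ∈ ball (0 : ℂ) 1, HasDerivAt A (z ^ n * (1 - z) ^ (-s)) z := fun z hz ↦ by
    rw [mem_ball_zero_iff] at hz
    refine (hasDerivAt_tsum_div_mul_pow hc n hz).congr_deriv ?_
    rw [← (hasSum_pochC_div_factorial_mul_pow s hz).tsum_eq, ← tsum_mul_left]
    exact tsum_congr fun k ↦ by ring
  have hR : ∀ z ∈ ball (0 : ℂ) 1,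
      HasDerivAt R (pochC (1 - s) (n + 1) / n.factorial * z ^ n * (1 - z) ^ (-s)) z :=
    fun z hz ↦ by
      simpa using hasDerivAt_one_sub_cpow_mul_sum_pochC (1 - s) n
        (one_sub_mem_slitPlane (mem_ball_zero_iff.mp hz))
  set p := pochC (1 - s) (n + 1)
  set m : ℂ := (n.factorial : ℂ)
  have hm : m ≠ 0 := Nat.cast_ne_zero.mpr n.factorial_ne_zero
  have hEq : Set.EqOn (fun w ↦ p * A w) (fun w ↦ m * R w) (ball 0 1) :=
    isOpen_ball.eqOn_of_deriv_eq (convex_ball 0 1).isPreconnected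
      (fun z hz ↦ ((hA z hz).const_mul p).differentiableAt.differentiableWithinAt)
      (fun z hz ↦ ((hR z hz).const_mul m).differentiableAt.differentiableWithinAt)
      (fun z hz ↦ by
        rw [((hA z hz).const_mul p).deriv, ((hR z hz).const_mul m).deriv]
        field_simp)
      (mem_ball_self one_pos) (by simp [A, R, sum_range_succ', pochC])
  have hEqt := hEq (mem_ball_zero_iff.mpr ht)
  simp only at hEqt
  rw [mul_assoc, hF, Nat.factorial_succ]
  push_cast
  linear_combination (n + 1 : ℂ) * hEqt

theorem reduction_first_diff_alt (n : ℕ) (t : ℂ) (ht : ‖t‖ < 1) (ht0 : t ≠ 0) :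
    hyp2F1 (1/2 + n) (1 + n) (2 + n) t =
      2 * (-1) ^ n * ((n + 1).factorial : ℂ) / (pochC (1/2) n * t ^ (n + 1)) *
        (1 - (1 - t) ^ ((1 : ℂ)/2 - n) *
          ∑ k ∈ Finset.range (n + 1), pochC (1/2 - n) k / (k.factorial : ℂ) * t ^ k) := by
  have hhalf : pochC (1/2) n ≠ 0 := pochC_ne_zero (fun j h ↦ by
    have := congrArg Complex.re h
    norm_num at this
    linarith [j.cast_nonneg (α := ℝ)]) n
  have hp : pochC (1 - (1/2 + n)) (n + 1) = (-1) ^ n * pochC (1/2) n / 2 := by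
    rw [pochC_succ, show (1 : ℂ) - (1/2 + n) = 1 - 1/2 - n by ring, pochC_one_sub_sub]
    ring
  have h := pochC_one_sub_mul_pow_mul_hyp2F1 (1/2 + n) n ht
  rw [hp, show (1 : ℂ) - (1/2 + n) = 1/2 - n by ring] at h
  have hsign : ((-1 : ℂ) ^ n) ^ 2 = 1 := by rw [← pow_mul, mul_comm, pow_mul]; norm_num
  rw [div_mul_eq_mul_div, eq_div_iff (mul_ne_zero hhalf (pow_ne_zero _ ht0))]
  linear_combination 2 * (-1) ^ n * h
    - hyp2F1 (1/2 + n) (1 + n) (2 + n) t * pochC (1/2) n * t ^ (n + 1) * hsign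
end

section
/- For positive integers n and real x, p with p > 0: ∫_0^∞ e^{-pt} t^{-1/2 - n} γ(n, xt) dt = (-√π (n-1)! (-p)^{n-1} / (1/2)_n) · [√p - √(p+x) · ∑_{k=0}^{n-1} ((1/2)_k / k!) (-x/p)^k], provided p + x > 0. -/
open scoped BigOperators Real

/-- Pochhammer symbol `(a)_k` on `ℝ`. -/
noncomputable def pochR (a : ℝ) (k : ℕ) : ℝ := ∏ i ∈ Finset.range k, (a + i)

/-- Lower incomplete gamma function `γ(n, z) = ∫_0^z u^{n-1} e^{-u} du`. -/
noncomputable def lowerGamma (ν z : ℝ) : ℝ :=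
  ∫ u in (0 : ℝ)..z, u ^ (ν - 1) * Real.exp (-u)

/-!
Substituting `u = s x t` gives `γ(n, x t) = (x t)ⁿ ∫₀¹ sⁿ⁻¹ e^{-s x t} ds`, so after Fubini and
`∫₀^∞ t^{-1/2} e^{-a t} dt = √π / √a` the integral becomes `√π xⁿ ∫₀¹ sⁿ⁻¹ (p + x s)^{-1/2} ds`.
Differentiating `s^{m+1} √(p + x s)` gives a two-term recurrence for these moments, and induction
on it yields the closed form.
-/

open MeasureTheory Set Real

lemma pochR_succ (a : ℝ) (k : ℕ) : pochR a (k + 1) = pochR a k * (a + k) :=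
  Finset.prod_range_succ _ _

lemma pochR_pos {a : ℝ} (ha : 0 < a) (k : ℕ) : 0 < pochR a k :=
  Finset.prod_pos fun _ _ => by positivity

lemma lowerGamma_natCast_succ (m : ℕ) (z : ℝ) :
    lowerGamma (m + 1 : ℕ) z = z ^ (m + 1) * ∫ s in (0 : ℝ)..1, s ^ m * exp (-(s * z)) := by
  have hpow : ∀ u : ℝ, u ^ (((m + 1 : ℕ) : ℝ) - 1) = u ^ m := fun u => by
    rw [Nat.cast_succ, add_sub_cancel_right, rpow_natCast]
  have hsub := intervalIntegral.smul_integral_comp_mul_right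
    (fun u : ℝ => u ^ m * exp (-u)) (a := 0) (b := 1) z
  simp only [zero_mul, one_mul, smul_eq_mul] at hsub
  simp only [lowerGamma, hpow, ← hsub, pow_succ', mul_assoc, ← intervalIntegral.integral_const_mul]
  congr 2 with s
  ring

lemma integral_Ioi_rpow_neg_half_mul_exp_neg_mul {a : ℝ} (ha : 0 < a) :
    ∫ t in Ioi (0 : ℝ), t ^ (-(1 : ℝ) / 2) * exp (-(a * t)) = √π / √a := by
  have h := integral_rpow_mul_exp_neg_mul_Ioi (a := 1 / 2) one_half_pos ha
  rw [show (1 : ℝ) / 2 - 1 = -(1 : ℝ) / 2 by norm_num] at h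
  rw [h, Gamma_one_half_eq, ← sqrt_eq_rpow, one_div, sqrt_inv, div_eq_mul_inv, mul_comm]

lemma min_le_add_mul_of_mem_Icc {p x s : ℝ} (hs : s ∈ Icc (0 : ℝ) 1) :
    min p (p + x) ≤ p + x * s := by
  obtain ⟨hs0, hs1⟩ := hs
  rcases le_total 0 x with hx | hx
  · nlinarith [min_le_left p (p + x)]
  · nlinarith [min_le_right p (p + x)]

section InvSqrtMoment

variable {p x : ℝ}

lemma add_mul_pos_of_mem_Icc (hp : 0 < p) (hpx : 0 < p + x) {s : ℝ} (hs : s ∈ Icc (0 : ℝ) 1) :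
    0 < p + x * s :=
  (lt_min hp hpx).trans_le (min_le_add_mul_of_mem_Icc hs)

noncomputable def invSqrtMoment (p x : ℝ) (m : ℕ) : ℝ :=
  ∫ s in (0 : ℝ)..1, s ^ m / √(p + x * s)

lemma intervalIntegrable_pow_div_sqrt (hp : 0 < p) (hpx : 0 < p + x) (m : ℕ) :
    IntervalIntegrable (fun s : ℝ => s ^ m / √(p + x * s)) volume 0 1 := by
  refine ContinuousOn.intervalIntegrable (ContinuousOn.div (by fun_prop) (by fun_prop) ?_)
  intro s hs
  rw [uIcc_of_le zero_le_one] at hs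
  exact (sqrt_pos.2 (add_mul_pos_of_mem_Icc hp hpx hs)).ne'

lemma hasDerivAt_sqrt_add_mul {s : ℝ} (h : 0 < p + x * s) :
    HasDerivAt (fun s => √(p + x * s)) (x / (2 * √(p + x * s))) s := by
  have hlin : HasDerivAt (fun s => p + x * s) x s := by
    simpa using ((hasDerivAt_id s).const_mul x).const_add p
  exact hlin.sqrt h.ne'

lemma mul_invSqrtMoment_zero (hp : 0 < p) (hpx : 0 < p + x) :
    x * invSqrtMoment p x 0 = 2 * √(p + x) - 2 * √p := by
  rw [invSqrtMoment, ← intervalIntegral.integral_const_mul,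
    intervalIntegral.integral_eq_sub_of_hasDerivAt (f := fun s => 2 * √(p + x * s))]
  · norm_num
  · intro s hs
    rw [uIcc_of_le zero_le_one] at hs
    have hpos := add_mul_pos_of_mem_Icc hp hpx hs
    refine ((hasDerivAt_sqrt_add_mul hpos).const_mul 2).congr_deriv ?_
    field_simp
  · exact (intervalIntegrable_pow_div_sqrt hp hpx 0).const_mul x

lemma invSqrtMoment_recurrence (hp : 0 < p) (hpx : 0 < p + x) (m : ℕ) :
    (m + 1) * p * invSqrtMoment p x m + x * (m + 1 + 1 / 2) * invSqrtMoment p x (m + 1)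
      = √(p + x) := by
  rw [invSqrtMoment, invSqrtMoment, ← intervalIntegral.integral_const_mul,
    ← intervalIntegral.integral_const_mul, ← intervalIntegral.integral_add
      ((intervalIntegrable_pow_div_sqrt hp hpx m).const_mul _)
      ((intervalIntegrable_pow_div_sqrt hp hpx (m + 1)).const_mul _),
    intervalIntegral.integral_eq_sub_of_hasDerivAt (f := fun s => s ^ (m + 1) * √(p + x * s))]
  · norm_num
  · intro s hs
    rw [uIcc_of_le zero_le_one] at hs
    have hpos := add_mul_pos_of_mem_Icc hp hpx hs
    have hsq : √(p + x * s) ^ 2 = p + x * s := sq_sqrt hpos.le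
    refine ((hasDerivAt_pow (m + 1) s).mul (hasDerivAt_sqrt_add_mul hpos)).congr_deriv ?_
    field_simp
    rw [Nat.add_sub_cancel]
    push_cast
    linear_combination (2 * (m + 1) * s ^ m) * hsq
  · exact ((intervalIntegrable_pow_div_sqrt hp hpx m).const_mul _).add
      ((intervalIntegrable_pow_div_sqrt hp hpx (m + 1)).const_mul _)

theorem pow_succ_mul_invSqrtMoment (hp : 0 < p) (hpx : 0 < p + x) (m : ℕ) :
    x ^ (m + 1) * invSqrtMoment p x m =
      -(-p) ^ m * (m.factorial : ℝ) / pochR (1 / 2) (m + 1) *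
        (√p - √(p + x) * ∑ k ∈ Finset.range (m + 1), pochR (1 / 2) k / k.factorial * (-x / p) ^ k) := by
  induction m with
  | zero =>
    have h0 : pochR (1 / 2) 0 = 1 := Finset.prod_range_zero _
    have h1 : pochR (1 / 2) 1 = 1 / 2 := by simp [pochR]
    rw [Finset.sum_range_one, h0, h1]
    linear_combination mul_invSqrtMoment_zero hp hpx
  | succ m ih =>
    have hrec : x ^ (m + 2) * invSqrtMoment p x (m + 1) =
        (x ^ (m + 1) * √(p + x) - (m + 1) * p * (x ^ (m + 1) * invSqrtMoment p x m))
          / (m + 1 + 1 / 2) := by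
      field_simp
      linear_combination (2 * x ^ (m + 1)) * invSqrtMoment_recurrence hp hpx m
    have hpow : (-p) ^ (m + 1) * (-x / p) ^ (m + 1) = x ^ (m + 1) := by
      rw [← mul_pow]; congr 1; field_simp
    have hP := (pochR_pos one_half_pos (m + 1)).ne'
    rw [hrec, ih, Finset.sum_range_succ _ (m + 1), pochR_succ _ (m + 1), Nat.factorial_succ m, ← hpow]
    generalize ∑ k ∈ Finset.range (m + 1), pochR (1 / 2) k / k.factorial * (-x / p) ^ k = S
    push_cast
    field_simp
    ring

end InvSqrtMoment

lemma integrable_pow_mul_rpow_neg_half_mul_exp {p x : ℝ} (hp : 0 < p) (hpx : 0 < p + x) (m : ℕ) :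
    Integrable (fun z : ℝ × ℝ => z.2 ^ m * (z.1 ^ (-(1 : ℝ) / 2) * exp (-((p + x * z.2) * z.1))))
      ((volume.restrict (Ioi 0)).prod (volume.restrict (Ioc 0 1))) := by
  set c := min p (p + x)
  have hbound : Integrable (fun z : ℝ × ℝ => z.1 ^ (-(1 : ℝ) / 2) * exp (-(c * z.1)) * 1)
      ((volume.restrict (Ioi 0)).prod (volume.restrict (Ioc 0 1))) := by
    have hg : IntegrableOn (fun t : ℝ => t ^ (-(1 : ℝ) / 2) * exp (-(c * t))) (Ioi 0) := by
      simpa [rpow_one, neg_mul] using integrableOn_rpow_mul_exp_neg_mul_rpow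
        (by norm_num : (-1 : ℝ) < -1 / 2) zero_lt_one (lt_min hp hpx)
    exact hg.mul_prod (integrable_const (1 : ℝ))
  refine hbound.mono' (by fun_prop) ?_
  rw [Measure.prod_restrict, ae_restrict_iff' (measurableSet_Ioi.prod measurableSet_Ioc)]
  filter_upwards with ⟨t, s⟩ ⟨ht, hs⟩
  obtain ⟨hs0, hs1⟩ : 0 < s ∧ s ≤ 1 := hs
  have hc : c ≤ p + x * s := min_le_add_mul_of_mem_Icc ⟨hs0.le, hs1⟩
  have ht' : 0 < t ^ (-(1 : ℝ) / 2) := rpow_pos_of_pos ht _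
  rw [norm_of_nonneg (by positivity), mul_one]
  calc s ^ m * (t ^ (-(1 : ℝ) / 2) * exp (-((p + x * s) * t)))
      ≤ 1 * (t ^ (-(1 : ℝ) / 2) * exp (-(c * t))) := by
        gcongr
        · exact pow_le_one₀ hs0.le hs1
        · exact ht.le
    _ = t ^ (-(1 : ℝ) / 2) * exp (-(c * t)) := one_mul _

lemma exp_mul_rpow_mul_lowerGamma_eq (m : ℕ) (x p : ℝ) {t : ℝ} (ht : 0 < t) :
    exp (-p * t) * t ^ (-(1 : ℝ) / 2 - ((m + 1 : ℕ) : ℝ)) * lowerGamma (m + 1 : ℕ) (x * t) =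
      x ^ (m + 1) * ∫ s in Ioc (0 : ℝ) 1, s ^ m * (t ^ (-(1 : ℝ) / 2) * exp (-((p + x * s) * t))) := by
  have hsplit : ∀ s : ℝ, s ^ m * (t ^ (-(1 : ℝ) / 2) * exp (-((p + x * s) * t))) =
      t ^ (-(1 : ℝ) / 2) * exp (-p * t) * (s ^ m * exp (-(s * (x * t)))) := fun s => by
    rw [show -((p + x * s) * t) = -p * t + -(s * (x * t)) by ring, exp_add]; ring
  have hpow : t ^ (-(1 : ℝ) / 2 - ((m + 1 : ℕ) : ℝ)) * t ^ (m + 1) = t ^ (-(1 : ℝ) / 2) := by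
    rw [← rpow_natCast, ← rpow_add ht, sub_add_cancel]
  simp_rw [hsplit]
  rw [integral_const_mul, ← intervalIntegral.integral_of_le zero_le_one, lowerGamma_natCast_succ,
    mul_pow]
  linear_combination (exp (-p * t) * x ^ (m + 1) *
    ∫ s in (0 : ℝ)..1, s ^ m * exp (-(s * (x * t)))) * hpow

lemma integral_exp_mul_rpow_mul_lowerGamma {p x : ℝ} (hp : 0 < p) (hpx : 0 < p + x) (m : ℕ) :
    ∫ t in Ioi (0 : ℝ), exp (-p * t) * t ^ (-(1 : ℝ) / 2 - ((m + 1 : ℕ) : ℝ)) *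
      lowerGamma (m + 1 : ℕ) (x * t) = √π * (x ^ (m + 1) * invSqrtMoment p x m) := by
  have hinner : ∀ s ∈ Ioc (0 : ℝ) 1,
      ∫ t in Ioi (0 : ℝ), s ^ m * (t ^ (-(1 : ℝ) / 2) * exp (-((p + x * s) * t))) =
        √π * (s ^ m / √(p + x * s)) := fun s hs => by
    rw [integral_const_mul, integral_Ioi_rpow_neg_half_mul_exp_neg_mul
      (add_mul_pos_of_mem_Icc hp hpx (Ioc_subset_Icc_self hs))]
    ring
  rw [setIntegral_congr_fun measurableSet_Ioi fun t ht => exp_mul_rpow_mul_lowerGamma_eq m x p ht,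
    integral_const_mul, integral_integral_swap (integrable_pow_mul_rpow_neg_half_mul_exp hp hpx m),
    setIntegral_congr_fun measurableSet_Ioc hinner, integral_const_mul, invSqrtMoment,
    intervalIntegral.integral_of_le zero_le_one]
  ring

theorem integral_lowerGamma_two (n : ℕ) (hn : 1 ≤ n) (x p : ℝ) (hp : 0 < p) (hpx : 0 < p + x) :
    ∫ t in Set.Ioi (0 : ℝ), Real.exp (-p * t) * t ^ (-(1 : ℝ)/2 - n) * lowerGamma n (x * t) =
      -Real.sqrt π * ((n - 1).factorial : ℝ) * (-p) ^ (n - 1) / pochR (1/2) n *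
        (Real.sqrt p - Real.sqrt (p + x) *
          ∑ k ∈ Finset.range n, pochR (1/2) k / (k.factorial : ℝ) * (-x / p) ^ k) := by
  obtain ⟨m, rfl⟩ := Nat.exists_eq_add_of_le' hn
  rw [integral_exp_mul_rpow_mul_lowerGamma hp hpx, pow_succ_mul_invSqrtMoment hp hpx,
    Nat.add_sub_cancel]
  ring
end
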